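/- Suppose the primal problem (4.1) is feasible, the dual problem (4.2) has an interior point (i.e., there exists λ⁰ ∈ ℝ^m with c(λ⁰) in the interior of P_A(K)), ℝ[x]_A is K-full, and I(h)+Q(g) is archimedean. Let b^k be the optimal value of the k-th dual relaxation (4.4) and b_max the optimal value of (4.2). Then b^k ≤ b_max for all k and b^k → b_max as k → ∞. -/

import Mathlib

open MeasureTheory MvPolynomial Finset

noncomputable section

/-- Exponent vectors `α ∈ ℕ^n`. -/
abbrev Exp (n : ℕ) := Fin n → ℕ

/-- Evaluation of the monomial `x^α` at a point `u ∈ ℝ^n`. -/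
def monoEval {n : ℕ} (α : Exp n) (u : Fin n → ℝ) : ℝ := ∏ i, u i ^ α i

/-- A polynomial in `ℝ[x]_A` is identified with its coefficient vector `p : A → ℝ`;
this is its evaluation at `u`. -/
def evalA {n : ℕ} (A : Finset (Exp n)) (p : A → ℝ) (u : Fin n → ℝ) : ℝ :=
  ∑ α : A, p α * monoEval (α : Exp n) u

/-- The pairing `⟨p, y⟩ = ∑_{α ∈ A} p_α y_α` between `ℝ[x]_A` and `ℝ^A`. -/
def pairA {n : ℕ} (A : Finset (Exp n)) (p y : A → ℝ) : ℝ :=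
  ∑ α : A, p α * y α

/-- The cone `P_A(K)` of polynomials in `ℝ[x]_A` nonnegative on `K`. -/
def PAcone {n : ℕ} (A : Finset (Exp n)) (K : Set (Fin n → ℝ)) : Set (A → ℝ) :=
  {p | ∀ u ∈ K, 0 ≤ evalA A p u}

/-- The cone `R_A(K)` of A-truncated moment sequences admitting a representing
(positive Borel) measure supported in `K`. -/
def RAcone {n : ℕ} (A : Finset (Exp n)) (K : Set (Fin n → ℝ)) : Set (A → ℝ) :=
  {y | ∃ μ : Measure (Fin n → ℝ), μ Kᶜ = 0 ∧
        ∀ α : A, Integrable (monoEval (α : Exp n)) μ ∧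
                 y α = ∫ u, monoEval (α : Exp n) u ∂μ}

/-- `ℝ[x]_A` is `K`-full: some `p ∈ ℝ[x]_A` is strictly positive on `K`. -/
def KFull {n : ℕ} (A : Finset (Exp n)) (K : Set (Fin n → ℝ)) : Prop :=
  ∃ p : A → ℝ, ∀ u ∈ K, 0 < evalA A p u

/-- The semialgebraic set `K = {x : h(x) = 0, g(x) ≥ 0}`. -/
def semiK {n m1 m2 : ℕ} (h : Fin m1 → MvPolynomial (Fin n) ℝ)
    (g : Fin m2 → MvPolynomial (Fin n) ℝ) : Set (Fin n → ℝ) :=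
  {x | (∀ i, eval x (h i) = 0) ∧ (∀ j, 0 ≤ eval x (g j))}

/-- `I_{2k}(h) = h_1 ℝ[x]_{2k - deg h_1} + ⋯ + h_{m1} ℝ[x]_{2k - deg h_{m1}}`. -/
def IhSet {n m1 : ℕ} (h : Fin m1 → MvPolynomial (Fin n) ℝ) (k : ℕ) :
    Set (MvPolynomial (Fin n) ℝ) :=
  {p | ∃ q : Fin m1 → MvPolynomial (Fin n) ℝ,
        (∀ i, q i = 0 ∨ (h i).totalDegree + (q i).totalDegree ≤ 2 * k) ∧
        p = ∑ i, h i * q i}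

/-- `Q_k(g) = Σ_{n,2k} + g_1 Σ_{n,2k-deg g_1} + ⋯ + g_{m2} Σ_{n,2k-deg g_{m2}}`. -/
def QgSet {n m2 : ℕ} (g : Fin m2 → MvPolynomial (Fin n) ℝ) (k : ℕ) :
    Set (MvPolynomial (Fin n) ℝ) :=
  {p | ∃ σ₀ : MvPolynomial (Fin n) ℝ, ∃ σ : Fin m2 → MvPolynomial (Fin n) ℝ,
        IsSumSq σ₀ ∧ σ₀.totalDegree ≤ 2 * k ∧
        (∀ j, IsSumSq (σ j) ∧ (σ j = 0 ∨ (g j).totalDegree + (σ j).totalDegree ≤ 2 * k)) ∧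
        p = σ₀ + ∑ j, g j * σ j}

/-- The truncated preordering `I_{2k}(h) + Q_k(g)`. -/
def IQSet {n m1 m2 : ℕ} (h : Fin m1 → MvPolynomial (Fin n) ℝ)
    (g : Fin m2 → MvPolynomial (Fin n) ℝ) (k : ℕ) : Set (MvPolynomial (Fin n) ℝ) :=
  {p | ∃ a ∈ IhSet h k, ∃ b ∈ QgSet g k, p = a + b}

/-- `I(h) + Q(g)` is archimedean: `R - ‖x‖² ∈ I_{2k}(h) + Q_k(g)` for some `R > 0` and `k`. -/
def ArchQM {n m1 m2 : ℕ} (h : Fin m1 → MvPolynomial (Fin n) ℝ)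
    (g : Fin m2 → MvPolynomial (Fin n) ℝ) : Prop :=
  ∃ R : ℝ, 0 < R ∧ ∃ k : ℕ, (C R - ∑ i : Fin n, X i ^ 2) ∈ IQSet h g k

/-- The Riesz functional `L_z(p) = ∑_α p_α z_α` of a (truncated) moment sequence `z`. -/
def riesz {n : ℕ} (z : Exp n → ℝ) (p : MvPolynomial (Fin n) ℝ) : ℝ :=
  ∑ α ∈ p.support, coeff α p * z α

/-- `Φ_k(g)`: all localizing matrices `L_{g_j}^{(k)}(z) ⪰ 0` for `j = 0,1,…,m2`
(with `g_0 = 1`), expressed via the quadratic forms `L_z(g_j p²) ≥ 0`. -/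
def PhiSet {n m2 : ℕ} (g : Fin m2 → MvPolynomial (Fin n) ℝ) (k : ℕ) : Set (Exp n → ℝ) :=
  {z | (∀ p : MvPolynomial (Fin n) ℝ, (p ^ 2).totalDegree ≤ 2 * k → 0 ≤ riesz z (p ^ 2)) ∧
       (∀ j, ∀ p : MvPolynomial (Fin n) ℝ,
          (g j * p ^ 2).totalDegree ≤ 2 * k → 0 ≤ riesz z (g j * p ^ 2))}

/-- `E_k(h)`: all localizing matrices `L_{h_i}^{(k)}(z) = 0`, expressed via the
vanishing of the quadratic forms `L_z(h_i p²)`. -/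
def ESet {n m1 : ℕ} (h : Fin m1 → MvPolynomial (Fin n) ℝ) (k : ℕ) : Set (Exp n → ℝ) :=
  {z | ∀ i, ∀ p : MvPolynomial (Fin n) ℝ,
        (h i * p ^ 2).totalDegree ≤ 2 * k → riesz z (h i * p ^ 2) = 0}

/-- Restriction `z|_A` of a moment sequence to the indices in `A`. -/
def restrA {n : ℕ} (A : Finset (Exp n)) (z : Exp n → ℝ) : A → ℝ := fun α => z α

/-- `deg(A) = max { |α| : α ∈ A }`. -/
def degA {n : ℕ} (A : Finset (Exp n)) : ℕ := A.sup fun α => ∑ i, α i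

/-- The polynomial `∑_{α ∈ A} p_α x^α` associated to a coefficient vector `p : A → ℝ`. -/
def toPoly {n : ℕ} (A : Finset (Exp n)) (p : A → ℝ) : MvPolynomial (Fin n) ℝ :=
  ∑ α : A, monomial (Finsupp.equivFunOnFinite.symm (α : Exp n)) (p α)

/-- `c(λ) = c - λ_1 a_1 - ⋯ - λ_m a_m` (as coefficient vectors in `ℝ[x]_A`). -/
def cLam {n m : ℕ} {A : Finset (Exp n)} (c : A → ℝ) (a : Fin m → (A → ℝ))
    (lam : Fin m → ℝ) : A → ℝ :=
  c - ∑ i, lam i • a i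

/-- Feasibility of `w` for the `k`-th primal relaxation (4.3). -/
def RelaxFeas {n m1 m2 m : ℕ} (h : Fin m1 → MvPolynomial (Fin n) ℝ)
    (g : Fin m2 → MvPolynomial (Fin n) ℝ) (A : Finset (Exp n))
    (a : Fin m → (A → ℝ)) (b : Fin m → ℝ) (k : ℕ) (w : Exp n → ℝ) : Prop :=
  w ∈ PhiSet g k ∩ ESet h k ∧ ∀ i, pairA A (a i) (restrA A w) = b i

/-- `w` is a minimizer of the `k`-th primal relaxation (4.3). -/
def RelaxMin {n m1 m2 m : ℕ} (h : Fin m1 → MvPolynomial (Fin n) ℝ)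
    (g : Fin m2 → MvPolynomial (Fin n) ℝ) (A : Finset (Exp n)) (c : A → ℝ)
    (a : Fin m → (A → ℝ)) (b : Fin m → ℝ) (k : ℕ) (w : Exp n → ℝ) : Prop :=
  RelaxFeas h g A a b k w ∧
  ∀ w' : Exp n → ℝ, RelaxFeas h g A a b k w' →
    pairA A c (restrA A w) ≤ pairA A c (restrA A w')

/-- The exponents `α ∈ ℕ^n` with `|α| ≤ r`, as a finite set. -/
def expSet (n r : ℕ) : Finset (Exp n) :=
  (Fintype.piFinset fun _ : Fin n => Finset.range (r + 1)).filter fun α => ∑ i, α i ≤ r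

/-- The `r`-th order moment matrix `M_r(z)`, with rows and columns indexed by
exponents of degree `≤ r` and entries `z_{α+β}`. -/
def momMat {n : ℕ} (z : Exp n → ℝ) (r : ℕ) :
    Matrix (expSet n r) (expSet n r) ℝ :=
  fun α β => z ((α : Exp n) + (β : Exp n))

/-- The degree bound `d_K = max{1, ⌈deg h_i / 2⌉, ⌈deg g_j / 2⌉}`. -/
def dKnum {n m1 m2 : ℕ} (h : Fin m1 → MvPolynomial (Fin n) ℝ)
    (g : Fin m2 → MvPolynomial (Fin n) ℝ) : ℕ :=
  max 1 (max (Finset.univ.sup fun i => ((h i).totalDegree + 1) / 2)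
             (Finset.univ.sup fun j => ((g j).totalDegree + 1) / 2))

/-- The truncation `z|_{2t}` is flat: the localizing conditions hold at order `t`
and `rank M_{t - d_K}(z) = rank M_t(z)`. -/
def IsFlat {n m1 m2 : ℕ} (h : Fin m1 → MvPolynomial (Fin n) ℝ)
    (g : Fin m2 → MvPolynomial (Fin n) ℝ) (t : ℕ) (z : Exp n → ℝ) : Prop :=
  z ∈ PhiSet g t ∩ ESet h t ∧
  (momMat z (t - dKnum h g)).rank = (momMat z t).rank

/-- `u` is a KKT point of `min f(x) s.t. h(x) = 0, g(x) ≥ 0`. -/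
def IsKKT {n m1 m2 : ℕ} (h : Fin m1 → MvPolynomial (Fin n) ℝ)
    (g : Fin m2 → MvPolynomial (Fin n) ℝ) (f : MvPolynomial (Fin n) ℝ)
    (u : Fin n → ℝ) : Prop :=
  u ∈ semiK h g ∧ ∃ μ : Fin m1 → ℝ, ∃ ν : Fin m2 → ℝ,
    (∀ j, 0 ≤ ν j) ∧ (∀ j, ν j * eval u (g j) = 0) ∧
    ∀ l : Fin n, eval u (pderiv l f) =
      ∑ i, μ i * eval u (pderiv l (h i)) + ∑ j, ν j * eval u (pderiv l (g j))

/-!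
Weak duality holds because every element of `I_{2k}(h) + Q_k(g)` is nonnegative on `K`. For the
convergence, take a dual feasible `λ₁` whose value is within `ε` of `b_max` and move it slightly
towards the interior point `λ₀`. Since `ℝ[x]_A` is `K`-full, `c(λ₀) > 0` on `K`, so the new `c(λ)`
is strictly positive on `K`; by Putinar's Positivstellensatz it lies in `I_{2k}(h) + Q_k(g)` for
all large `k`, and its value is still above `b_max - ε`.

Putinar's theorem is obtained from Jacobi's representation theorem: if `M` is an archimedean
quadratic module in a commutative `ℝ`-algebra and `φ f > 0` for every character `φ` that is
nonnegative on `M`, then `f ∈ M`. Put `m₀ = sup {t : f - t ∈ M}`; it suffices that `m₀ > 0`.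
If `m₀ ≤ 0`, either `-1 ∈ M + ΣR²(m₀ - f)`, and an explicit certificate puts `f - m₀ - ε` in `M`,
contradicting the choice of `m₀`; or `M + ΣR²(m₀ - f)` extends to a maximal proper quadratic
module `Q`. Archimedeanity gives `Q ∪ -Q = R`, which makes `p ↦ inf {r : r - p ∈ Q}` a character
`φ` with `φ f ≤ m₀ ≤ 0`.
-/

open Filter Topology

section QuadraticModule

variable {R : Type*} [CommRing R]

theorem IsSumSq.map {S F : Type*} [CommRing S] [FunLike F R S] [RingHomClass F R S] (f : F)
    {s : R} (hs : IsSumSq s) : IsSumSq (f s) := by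
  induction hs with
  | zero => simp
  | sq_add a _ ih => simpa using IsSumSq.sq_add (f a) ih

structure IsQuadraticModule (M : Set R) : Prop where
  add_mem {a b : R} : a ∈ M → b ∈ M → a + b ∈ M
  sq_mul_mem (s : R) {a : R} : a ∈ M → s ^ 2 * a ∈ M
  one_mem : (1 : R) ∈ M

def IsProperQM (M : Set R) : Prop := IsQuadraticModule M ∧ (-1 : R) ∉ M

def qmAdjoin (M : Set R) (b : R) : Set R :=
  {x | ∃ q ∈ M, ∃ s, IsSumSq s ∧ x = q + s * b}

theorem subset_qmAdjoin (M : Set R) (b : R) : M ⊆ qmAdjoin M b :=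
  fun q hq => ⟨q, hq, 0, .zero, by ring⟩

namespace IsQuadraticModule

variable {M : Set R}

theorem zero_mem (hM : IsQuadraticModule M) : (0 : R) ∈ M := by
  simpa using hM.sq_mul_mem 0 hM.one_mem

theorem sq_mem (hM : IsQuadraticModule M) (s : R) : s ^ 2 ∈ M := by
  simpa using hM.sq_mul_mem s hM.one_mem

theorem mul_mem_of_isSumSq (hM : IsQuadraticModule M) {s a : R} (hs : IsSumSq s)
    (ha : a ∈ M) : s * a ∈ M := by
  induction hs with
  | zero => simpa using hM.zero_mem
  | sq_add b _ ih => simpa [add_mul, sq] using hM.add_mem (hM.sq_mul_mem b ha) ih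

theorem mem_of_isSumSq (hM : IsQuadraticModule M) {s : R} (hs : IsSumSq s) : s ∈ M := by
  simpa using hM.mul_mem_of_isSumSq hs hM.one_mem

theorem adjoin (hM : IsQuadraticModule M) (b : R) : IsQuadraticModule (qmAdjoin M b) where
  add_mem := by
    rintro _ _ ⟨q, hq, s, hs, rfl⟩ ⟨q', hq', s', hs', rfl⟩
    exact ⟨q + q', hM.add_mem hq hq', s + s', hs.add hs', by ring⟩
  sq_mul_mem t := by
    rintro _ ⟨q, hq, s, hs, rfl⟩
    exact ⟨t ^ 2 * q, hM.sq_mul_mem t hq, t ^ 2 * s, (IsSquare.sq t).isSumSq.mul hs, by ring⟩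
  one_mem := ⟨1, hM.one_mem, 0, .zero, by ring⟩

theorem mem_qmAdjoin_self (hM : IsQuadraticModule M) (b : R) : b ∈ qmAdjoin M b :=
  ⟨0, hM.zero_mem, 1, .one, by ring⟩

theorem exists_maximal (hM : IsQuadraticModule M) (hneg : (-1 : R) ∉ M) :
    ∃ Q, M ⊆ Q ∧ Maximal IsProperQM Q := by
  refine zorn_subset_nonempty _ (fun c hc hchain ⟨Q₀, hQ₀⟩ => ?_) M ⟨hM, hneg⟩
  refine ⟨⋃₀ c, ⟨⟨?_, ?_, ?_⟩, ?_⟩, fun Q hQ => Set.subset_sUnion_of_mem hQ⟩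
  · rintro a b ⟨Qa, hQa, ha⟩ ⟨Qb, hQb, hb⟩
    rcases hchain.total hQa hQb with hab | hab
    · exact ⟨Qb, hQb, (hc hQb).1.add_mem (hab ha) hb⟩
    · exact ⟨Qa, hQa, (hc hQa).1.add_mem ha (hab hb)⟩
  · rintro s a ⟨Q, hQ, ha⟩
    exact ⟨Q, hQ, (hc hQ).1.sq_mul_mem s ha⟩
  · exact ⟨Q₀, hQ₀, (hc hQ₀).1.one_mem⟩
  · rintro ⟨Q, hQ, hmem⟩
    exact (hc hQ).2 hmem

end IsQuadraticModule

theorem neg_one_mem_qmAdjoin_of_maximal {Q : Set R} (hQ : Maximal IsProperQM Q) {b : R}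
    (hb : b ∉ Q) : (-1 : R) ∈ qmAdjoin Q b := by
  by_contra hneg
  exact hb (hQ.2 ⟨hQ.1.1.adjoin b, hneg⟩ (subset_qmAdjoin Q b) (hQ.1.1.mem_qmAdjoin_self b))

end QuadraticModule

section RealAlgebra

variable {R : Type*} [CommRing R] [Algebra ℝ R] {M Q : Set R}

namespace IsQuadraticModule

theorem algebraMap_mul_mem (hM : IsQuadraticModule M) {t : ℝ} (ht : 0 ≤ t) {a : R}
    (ha : a ∈ M) : algebraMap ℝ R t * a ∈ M := by
  rw [← Real.sq_sqrt ht, map_pow]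
  exact hM.sq_mul_mem _ ha

theorem algebraMap_mem (hM : IsQuadraticModule M) {t : ℝ} (ht : 0 ≤ t) :
    algebraMap ℝ R t ∈ M := by
  simpa using hM.algebraMap_mul_mem ht hM.one_mem

theorem algebraMap_sub_mem_of_le (hM : IsQuadraticModule M) {s t : ℝ} {p : R}
    (hs : algebraMap ℝ R s - p ∈ M) (hst : s ≤ t) : algebraMap ℝ R t - p ∈ M := by
  have e : algebraMap ℝ R t - p = algebraMap ℝ R (t - s) + (algebraMap ℝ R s - p) := by
    rw [map_sub]; ring
  rw [e]
  exact hM.add_mem (hM.algebraMap_mem (sub_nonneg.2 hst)) hs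

theorem sub_algebraMap_mem_of_le (hM : IsQuadraticModule M) {s t : ℝ} {p : R}
    (ht : p - algebraMap ℝ R t ∈ M) (hst : s ≤ t) : p - algebraMap ℝ R s ∈ M := by
  have e : p - algebraMap ℝ R s = (p - algebraMap ℝ R t) + algebraMap ℝ R (t - s) := by
    rw [map_sub]; ring
  rw [e]
  exact hM.add_mem ht (hM.algebraMap_mem (sub_nonneg.2 hst))

theorem neg_one_mem_of_algebraMap_mem (hM : IsQuadraticModule M) {t : ℝ} (ht : t < 0)
    (h : algebraMap ℝ R t ∈ M) : (-1 : R) ∈ M := by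
  have e : (-1 : R) = algebraMap ℝ R (-t⁻¹) * algebraMap ℝ R t := by
    rw [← map_mul, neg_mul, inv_mul_cancel₀ ht.ne, map_neg, map_one]
  rw [e]
  exact hM.algebraMap_mul_mem (neg_nonneg.2 (inv_nonpos.2 ht.le)) h

theorem nonneg_of_algebraMap_mem (hM : IsQuadraticModule M) (hneg : (-1 : R) ∉ M) {t : ℝ}
    (ht : algebraMap ℝ R t ∈ M) : 0 ≤ t :=
  not_lt.1 fun h => hneg (hM.neg_one_mem_of_algebraMap_mem h ht)

theorem mem_of_neg_one_mem (hM : IsQuadraticModule M) (h : (-1 : R) ∈ M) (p : R) : p ∈ M := by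
  have half : algebraMap ℝ R 2⁻¹ * 2 = 1 := by
    rw [← map_ofNat (algebraMap ℝ R) 2, ← map_mul]; norm_num
  have e : p = (algebraMap ℝ R 2⁻¹ * (p + 1)) ^ 2 * 1
      + (algebraMap ℝ R 2⁻¹ * (p - 1)) ^ 2 * (-1) := by
    linear_combination (-(2 * algebraMap ℝ R 2⁻¹ + 1) * p) * half
  rw [e]
  exact hM.add_mem (hM.sq_mul_mem _ hM.one_mem) (hM.sq_mul_mem _ h)

theorem mul_mem_of_add_eq_algebraMap (hM : IsQuadraticModule M) {a b : R} {c : ℝ}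
    (ha : a ∈ M) (hb : b ∈ M) (hab : a + b = algebraMap ℝ R c) (hc : 0 < c) :
    a * b ∈ M := by
  have e : a * b = algebraMap ℝ R c⁻¹ * (b ^ 2 * a + a ^ 2 * b) := by
    have inv : algebraMap ℝ R c⁻¹ * algebraMap ℝ R c = 1 := by
      rw [← map_mul, inv_mul_cancel₀ hc.ne', map_one]
    linear_combination (-(a * b)) * inv - (algebraMap ℝ R c⁻¹ * a * b) * hab
  rw [e]
  exact hM.algebraMap_mul_mem (inv_nonneg.2 hc.le)
    (hM.add_mem (hM.sq_mul_mem b ha) (hM.sq_mul_mem a hb))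

def boundedSubalgebra (hM : IsQuadraticModule M) : Subalgebra ℝ R where
  carrier := {p | ∃ N : ℝ, algebraMap ℝ R N - p ^ 2 ∈ M}
  add_mem' := by
    rintro p q ⟨N, hp⟩ ⟨N', hq⟩
    refine ⟨2 * N + 2 * N', ?_⟩
    have e : algebraMap ℝ R (2 * N + 2 * N') - (p + q) ^ 2
        = ((algebraMap ℝ R N - p ^ 2) + (algebraMap ℝ R N - p ^ 2))
          + ((algebraMap ℝ R N' - q ^ 2) + (algebraMap ℝ R N' - q ^ 2)) + (p - q) ^ 2 := by
      simp only [map_add, map_mul, map_ofNat]; ring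
    rw [e]
    exact hM.add_mem (hM.add_mem (hM.add_mem hp hp) (hM.add_mem hq hq)) (hM.sq_mem _)
  mul_mem' := by
    rintro p q ⟨N, hp⟩ ⟨N', hq⟩
    have hp' := hM.algebraMap_sub_mem_of_le hp (le_max_left N 0)
    refine ⟨max N 0 * N', ?_⟩
    have e : algebraMap ℝ R (max N 0 * N') - (p * q) ^ 2
        = algebraMap ℝ R (max N 0) * (algebraMap ℝ R N' - q ^ 2)
          + q ^ 2 * (algebraMap ℝ R (max N 0) - p ^ 2) := by
      rw [map_mul]; ring
    rw [e]
    exact hM.add_mem (hM.algebraMap_mul_mem (le_max_right N 0) hq) (hM.sq_mul_mem q hp')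
  algebraMap_mem' t := ⟨t ^ 2, by simpa using hM.zero_mem⟩

theorem exists_algebraMap_sub_mem (hM : IsQuadraticModule M) {p : R}
    (hp : p ∈ hM.boundedSubalgebra) : ∃ N : ℝ, algebraMap ℝ R N - p ∈ M := by
  obtain ⟨N, hN⟩ := hp
  set c := |N| + 1
  have hc : 0 < c := by positivity
  have hc2 : algebraMap ℝ R (c ^ 2) - p ^ 2 ∈ M :=
    hM.algebraMap_sub_mem_of_le hN (by nlinarith [le_abs_self N, abs_nonneg N])
  refine ⟨c, ?_⟩
  have e : algebraMap ℝ R c - p = algebraMap ℝ R (2 * c)⁻¹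
      * ((algebraMap ℝ R c - p) ^ 2 + (algebraMap ℝ R (c ^ 2) - p ^ 2)) := by
    have inv : algebraMap ℝ R (2 * c)⁻¹ * (2 * algebraMap ℝ R c) = 1 := by
      rw [← map_ofNat (algebraMap ℝ R) 2, ← map_mul, ← map_mul, inv_mul_cancel₀ (by positivity),
        map_one]
    rw [map_pow]
    linear_combination (-(algebraMap ℝ R c - p)) * inv
  rw [e]
  exact hM.algebraMap_mul_mem (by positivity) (hM.add_mem (hM.sq_mem _) hc2)

end IsQuadraticModule

def IsArchimedeanQM (M : Set R) : Prop := ∀ p : R, ∃ N : ℝ, algebraMap ℝ R N - p ∈ M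

theorem IsArchimedeanQM.mono (hM : IsArchimedeanQM M) (hMQ : M ⊆ Q) : IsArchimedeanQM Q :=
  fun p => (hM p).imp fun _ hN => hMQ hN

namespace IsQuadraticModule

theorem isArchimedeanQM_of_adjoin_eq_top (hM : IsQuadraticModule M) {s : Set R}
    (hs : Algebra.adjoin ℝ s = ⊤) (hb : ∀ x ∈ s, ∃ N : ℝ, algebraMap ℝ R N - x ^ 2 ∈ M) :
    IsArchimedeanQM M := fun _ =>
  hM.exists_algebraMap_sub_mem <|
    (Algebra.adjoin_le (S := hM.boundedSubalgebra) hb) (hs ▸ Algebra.mem_top)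

theorem exists_nonneg_algebraMap_sub_mem (hM : IsQuadraticModule M) (harch : IsArchimedeanQM M)
    (p : R) : ∃ N : ℝ, 0 ≤ N ∧ algebraMap ℝ R N - p ∈ M := by
  obtain ⟨N, hN⟩ := harch p
  exact ⟨max N 0, le_max_right N 0, hM.algebraMap_sub_mem_of_le hN (le_max_left N 0)⟩

end IsQuadraticModule

theorem mem_or_neg_mem_of_maximal (hQ : Maximal IsProperQM Q) (harch : IsArchimedeanQM Q)
    (a : R) : a ∈ Q ∨ -a ∈ Q := by
  by_contra! ⟨ha, hna⟩
  -- maximality gives `s₁ a = -1 - q₁` and `s₂ a = 1 + q₂`, whence `-s₁² ∈ Q`; a bound on `-a`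
  -- then produces `-1 ∈ Q`
  have hQ' := hQ.1.1
  obtain ⟨q₁, hq₁, s₁, hs₁, e₁⟩ := neg_one_mem_qmAdjoin_of_maximal hQ ha
  obtain ⟨q₂, hq₂, s₂, hs₂, e₂⟩ := neg_one_mem_qmAdjoin_of_maximal hQ hna
  have hneg_sq : -s₁ ^ 2 ∈ Q := by
    have e : -s₁ ^ 2 = s₁ ^ 2 * q₂ + s₁ * (s₂ * (1 + q₁)) := by
      linear_combination (s₁ * s₂) * e₁ + s₁ ^ 2 * e₂
    rw [e]
    exact hQ'.add_mem (hQ'.sq_mul_mem s₁ hq₂)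
      (hQ'.mul_mem_of_isSumSq hs₁ (hQ'.mul_mem_of_isSumSq hs₂ (hQ'.add_mem hQ'.one_mem hq₁)))
  obtain ⟨N, hN⟩ := harch (-a)
  have hlin : algebraMap ℝ R N * s₁ - 1 ∈ Q := by
    have e : algebraMap ℝ R N * s₁ - 1 = s₁ * (algebraMap ℝ R N - -a) + q₁ := by
      linear_combination e₁
    rw [e]
    exact hQ'.add_mem (hQ'.mul_mem_of_isSumSq hs₁ hN) hq₁
  have e : (-1 : R) = (algebraMap ℝ R N * s₁ - 1) ^ 2 + algebraMap ℝ R N ^ 2 * (-s₁ ^ 2)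
      + ((algebraMap ℝ R N * s₁ - 1) + (algebraMap ℝ R N * s₁ - 1)) := by
    ring
  exact hQ.1.2 (e ▸ hQ'.add_mem (hQ'.add_mem (hQ'.sq_mem _) (hQ'.sq_mul_mem _ hneg_sq))
    (hQ'.add_mem hlin hlin))

end RealAlgebra

section Character

variable {R : Type*} [CommRing R] [Algebra ℝ R]

structure IsArchimedeanTotalQM (Q : Set R) : Prop extends IsQuadraticModule Q where
  archimedean : IsArchimedeanQM Q
  neg_one_not_mem : (-1 : R) ∉ Q
  mem_or_neg_mem (p : R) : p ∈ Q ∨ -p ∈ Q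

def qmChar (Q : Set R) (p : R) : ℝ := sInf {r : ℝ | algebraMap ℝ R r - p ∈ Q}

namespace IsArchimedeanTotalQM

variable {Q : Set R}

theorem le_of_sub_mem (hQ : IsArchimedeanTotalQM Q) {p : R} {r₁ r₂ : ℝ}
    (h₁ : algebraMap ℝ R r₁ - p ∈ Q) (h₂ : p - algebraMap ℝ R r₂ ∈ Q) : r₂ ≤ r₁ := by
  refine sub_nonneg.1 (hQ.nonneg_of_algebraMap_mem hQ.neg_one_not_mem ?_)
  simpa [map_sub] using hQ.add_mem h₁ h₂

theorem bddBelow (hQ : IsArchimedeanTotalQM Q) (p : R) :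
    BddBelow {r : ℝ | algebraMap ℝ R r - p ∈ Q} := by
  obtain ⟨N, hN⟩ := hQ.archimedean (-p)
  have hN' : p - algebraMap ℝ R (-N) ∈ Q := by
    convert hN using 1; rw [map_neg]; ring
  exact ⟨-N, fun r hr => hQ.le_of_sub_mem hr hN'⟩

theorem qmChar_le (hQ : IsArchimedeanTotalQM Q) {p : R} {r : ℝ}
    (hr : algebraMap ℝ R r - p ∈ Q) : qmChar Q p ≤ r :=
  csInf_le (hQ.bddBelow p) hr

theorem sub_mem_of_qmChar_lt (hQ : IsArchimedeanTotalQM Q) {p : R} {r : ℝ}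
    (hr : qmChar Q p < r) : algebraMap ℝ R r - p ∈ Q := by
  obtain ⟨r', hr', hlt⟩ := exists_lt_of_csInf_lt (hQ.archimedean p) hr
  exact hQ.algebraMap_sub_mem_of_le hr' hlt.le

theorem sub_mem_of_lt_qmChar (hQ : IsArchimedeanTotalQM Q) {p : R} {r : ℝ}
    (hr : r < qmChar Q p) : p - algebraMap ℝ R r ∈ Q := by
  have hnot : algebraMap ℝ R r - p ∉ Q := fun h => (hQ.qmChar_le h).not_gt hr
  simpa using (hQ.mem_or_neg_mem _).resolve_left hnot

theorem qmChar_eq_of_forall (hQ : IsArchimedeanTotalQM Q) {p : R} {s : ℝ}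
    (h₁ : ∀ r, s < r → algebraMap ℝ R r - p ∈ Q) (h₂ : ∀ r < s, p - algebraMap ℝ R r ∈ Q) :
    qmChar Q p = s := by
  refine le_antisymm ?_ ?_
  · refine le_of_forall_lt_imp_le_of_dense fun r₂ hr₂ => ?_
    exact le_of_forall_gt_imp_ge_of_dense fun r₁ hr₁ =>
      hQ.le_of_sub_mem (h₁ r₁ hr₁) (hQ.sub_mem_of_lt_qmChar hr₂)
  · refine le_of_forall_lt_imp_le_of_dense fun r₂ hr₂ => ?_
    exact le_of_forall_gt_imp_ge_of_dense fun r₁ hr₁ =>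
      hQ.le_of_sub_mem (hQ.sub_mem_of_qmChar_lt hr₁) (h₂ r₂ hr₂)

theorem qmChar_algebraMap (hQ : IsArchimedeanTotalQM Q) (t : ℝ) :
    qmChar Q (algebraMap ℝ R t) = t :=
  hQ.qmChar_eq_of_forall
    (fun r hr => by simpa [← map_sub] using hQ.algebraMap_mem (sub_nonneg.2 hr.le))
    (fun r hr => by simpa [← map_sub] using hQ.algebraMap_mem (sub_nonneg.2 hr.le))

theorem qmChar_add (hQ : IsArchimedeanTotalQM Q) (p q : R) :
    qmChar Q (p + q) = qmChar Q p + qmChar Q q := by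
  refine hQ.qmChar_eq_of_forall (fun r hr => ?_) (fun r hr => ?_)
  · have e : algebraMap ℝ R r - (p + q) = (algebraMap ℝ R ((r + qmChar Q p - qmChar Q q) / 2) - p)
        + (algebraMap ℝ R (r - (r + qmChar Q p - qmChar Q q) / 2) - q) := by
      rw [map_sub]; ring
    rw [e]
    exact hQ.add_mem (hQ.sub_mem_of_qmChar_lt (by linarith))
      (hQ.sub_mem_of_qmChar_lt (by linarith))
  · have e : p + q - algebraMap ℝ R r = (p - algebraMap ℝ R ((r + qmChar Q p - qmChar Q q) / 2))
        + (q - algebraMap ℝ R (r - (r + qmChar Q p - qmChar Q q) / 2)) := by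
      rw [map_sub]; ring
    rw [e]
    exact hQ.add_mem (hQ.sub_mem_of_lt_qmChar (by linarith))
      (hQ.sub_mem_of_lt_qmChar (by linarith))

theorem qmChar_neg (hQ : IsArchimedeanTotalQM Q) (p : R) : qmChar Q (-p) = -qmChar Q p :=
  hQ.qmChar_eq_of_forall
    (fun r hr => by
      convert hQ.sub_mem_of_lt_qmChar (p := p) (neg_lt.1 hr) using 1; rw [map_neg]; ring)
    (fun r hr => by
      convert hQ.sub_mem_of_qmChar_lt (p := p) (lt_neg.2 hr) using 1; rw [map_neg]; ring)

theorem qmChar_algebraMap_mul_of_pos (hQ : IsArchimedeanTotalQM Q) {c : ℝ} (hc : 0 < c)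
    (p : R) : qmChar Q (algebraMap ℝ R c * p) = c * qmChar Q p := by
  have e : ∀ r, algebraMap ℝ R r = algebraMap ℝ R c * algebraMap ℝ R (r / c) := fun r => by
    rw [← map_mul, mul_div_cancel₀ r hc.ne']
  refine hQ.qmChar_eq_of_forall (fun r hr => ?_) (fun r hr => ?_)
  · rw [e r, ← mul_sub]
    exact hQ.algebraMap_mul_mem hc.le (hQ.sub_mem_of_qmChar_lt ((lt_div_iff₀' hc).2 hr))
  · rw [e r, ← mul_sub]
    exact hQ.algebraMap_mul_mem hc.le (hQ.sub_mem_of_lt_qmChar ((div_lt_iff₀' hc).2 hr))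

theorem qmChar_algebraMap_mul (hQ : IsArchimedeanTotalQM Q) (c : ℝ) (p : R) :
    qmChar Q (algebraMap ℝ R c * p) = c * qmChar Q p := by
  rcases lt_trichotomy c 0 with hc | rfl | hc
  · have e : algebraMap ℝ R c * p = -(algebraMap ℝ R (-c) * p) := by rw [map_neg]; ring
    rw [e, hQ.qmChar_neg, hQ.qmChar_algebraMap_mul_of_pos (neg_pos.2 hc)]
    ring
  · simpa using hQ.qmChar_algebraMap 0
  · exact hQ.qmChar_algebraMap_mul_of_pos hc p

theorem qmChar_nonneg (hQ : IsArchimedeanTotalQM Q) {p : R} (hp : p ∈ Q) : 0 ≤ qmChar Q p :=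
  le_of_forall_gt_imp_ge_of_dense fun _ hr =>
    hQ.le_of_sub_mem (hQ.sub_mem_of_qmChar_lt hr) (by simpa using hp)

def qmCharLinear (hQ : IsArchimedeanTotalQM Q) : R →ₗ[ℝ] ℝ where
  toFun := qmChar Q
  map_add' := hQ.qmChar_add
  map_smul' c p := by rw [Algebra.smul_def, hQ.qmChar_algebraMap_mul]; rfl

theorem qmChar_sq (hQ : IsArchimedeanTotalQM Q) (p : R) : qmChar Q (p ^ 2) = qmChar Q p ^ 2 := by
  refine le_antisymm (le_of_forall_gt_imp_ge_of_dense fun r hr => ?_) ?_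
  · -- `√r ± p ∈ Q` because `|qmChar Q p| < √r`, so their product `r - p²` lies in `Q`
    have hρ : |qmChar Q p| < √r := Real.lt_sqrt_of_sq_lt (by rwa [sq_abs])
    have hρ₀ : 0 < √r := (abs_nonneg _).trans_lt hρ
    have hminus := hQ.sub_mem_of_qmChar_lt ((le_abs_self _).trans_lt hρ)
    have hplus : algebraMap ℝ R √r - -p ∈ Q :=
      hQ.sub_mem_of_qmChar_lt (by rw [hQ.qmChar_neg]; exact (neg_le_abs _).trans_lt hρ)
    have hprod := hQ.mul_mem_of_add_eq_algebraMap hminus hplus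
      (by rw [map_mul, map_ofNat]; ring : _ = algebraMap ℝ R (2 * √r)) (by positivity)
    refine hQ.qmChar_le ?_
    have hr' : algebraMap ℝ R r = algebraMap ℝ R √r ^ 2 := by
      rw [← map_pow, Real.sq_sqrt ((sq_nonneg _).trans hr.le)]
    convert hprod using 1
    rw [hr']; ring
  · have h := hQ.qmChar_nonneg (hQ.sq_mem (p - algebraMap ℝ R (qmChar Q p)))
    have e : (p - algebraMap ℝ R (qmChar Q p)) ^ 2
        = p ^ 2 + algebraMap ℝ R (-2 * qmChar Q p) * p + algebraMap ℝ R (qmChar Q p ^ 2) := by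
      simp only [map_mul, map_neg, map_pow, map_ofNat]; ring
    rw [e, hQ.qmChar_add, hQ.qmChar_add, hQ.qmChar_algebraMap_mul, hQ.qmChar_algebraMap] at h
    nlinarith

theorem qmChar_mul (hQ : IsArchimedeanTotalQM Q) (p q : R) :
    qmChar Q (p * q) = qmChar Q p * qmChar Q q := by
  have e : p * q = algebraMap ℝ R 4⁻¹ * ((p + q) ^ 2 + -(p + -q) ^ 2) := by
    have inv : algebraMap ℝ R 4⁻¹ * 4 = 1 := by
      rw [← map_ofNat (algebraMap ℝ R) 4, ← map_mul]; norm_num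
    linear_combination (-(p * q)) * inv
  rw [e, hQ.qmChar_algebraMap_mul, hQ.qmChar_add, hQ.qmChar_neg, hQ.qmChar_sq, hQ.qmChar_sq,
    hQ.qmChar_add, hQ.qmChar_add, hQ.qmChar_neg]
  ring

def qmCharHom (hQ : IsArchimedeanTotalQM Q) : R →ₐ[ℝ] ℝ :=
  AlgHom.ofLinearMap hQ.qmCharLinear (by simpa using hQ.qmChar_algebraMap 1 : qmChar Q 1 = 1)
    hQ.qmChar_mul

theorem qmCharHom_nonneg (hQ : IsArchimedeanTotalQM Q) {p : R} (hp : p ∈ Q) :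
    0 ≤ hQ.qmCharHom p :=
  hQ.qmChar_nonneg hp

end IsArchimedeanTotalQM

theorem IsQuadraticModule.exists_algHom_nonneg {M : Set R} (hM : IsQuadraticModule M)
    (harch : IsArchimedeanQM M) (hneg : (-1 : R) ∉ M) :
    ∃ φ : R →ₐ[ℝ] ℝ, ∀ p ∈ M, 0 ≤ φ p := by
  obtain ⟨Q, hMQ, hmax⟩ := hM.exists_maximal hneg
  have hQ : IsArchimedeanTotalQM Q :=
    { hmax.1.1 with
      archimedean := harch.mono hMQ
      neg_one_not_mem := hmax.1.2
      mem_or_neg_mem := mem_or_neg_mem_of_maximal hmax (harch.mono hMQ) }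
  exact ⟨hQ.qmCharHom, fun p hp => hQ.qmCharHom_nonneg (hMQ hp)⟩

end Character

section Positivstellensatz

variable {R : Type*} [CommRing R] [Algebra ℝ R] {M : Set R}

namespace IsQuadraticModule

theorem exists_pos_sub_algebraMap_mem_of_mul_eq (hM : IsQuadraticModule M)
    (harch : IsArchimedeanQM M) {g s q : R} (hq : q ∈ M) (hsg : s * g = 1 + q)
    (hg : ∀ δ : ℝ, 0 < δ → g + algebraMap ℝ R δ ∈ M) :
    ∃ ε : ℝ, 0 < ε ∧ g - algebraMap ℝ R ε ∈ M := by
  set ι := algebraMap ℝ R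
  obtain ⟨c₁, hc₁, hs⟩ := hM.exists_nonneg_algebraMap_sub_mem harch s
  obtain ⟨c₂, hc₂, hsq⟩ := hM.exists_nonneg_algebraMap_sub_mem harch (s * q)
  -- `l` and `δ` are chosen small enough that the constant `κ` of the certificate `e` is `≥ 0`
  set l := (c₁ + c₂ + 1)⁻¹
  have hl : 0 < l := by positivity
  have hl₁ : l * (c₁ + c₂ + 1) = 1 := inv_mul_cancel₀ (by positivity)
  obtain ⟨c₃, hc₃, hsq'⟩ := hM.exists_nonneg_algebraMap_sub_mem harch ((1 - ι l * s) ^ 2)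
  set δ := l / (2 * (c₃ + 1))
  have hδ : 0 < δ := by positivity
  have hδ₁ : δ * (2 * (c₃ + 1)) = l := div_mul_cancel₀ l (by positivity)
  set κ := 2 * l - δ * c₃ - l ^ 2 * c₁ - l ^ 2 * c₂ - l / 2
  have hκ : 0 ≤ κ := by
    have h₁ : l ^ 2 * c₁ + l ^ 2 * c₂ = l - l ^ 2 := by linear_combination l * hl₁
    have h₂ : 2 * (δ * c₃) = l - 2 * δ := by linear_combination hδ₁
    simp only [κ]
    nlinarith
  have hκ' : ι κ = 2 * ι l - ι δ * ι c₃ - ι l ^ 2 * ι c₁ - ι l ^ 2 * ι c₂ - ι (l / 2) := by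
    simp only [κ, map_sub, map_mul, map_pow, map_ofNat]
  have e : g - ι (l / 2) = (1 - ι l * s) ^ 2 * (g + ι δ) + ι δ * (ι c₃ - (1 - ι l * s) ^ 2)
      + (ι l * q + ι l * q) + ι l ^ 2 * (ι c₁ - s) + ι l ^ 2 * (ι c₂ - s * q) + ι κ := by
    rw [hκ']
    linear_combination (2 * ι l - ι l ^ 2 * s) * hsg
  refine ⟨l / 2, by positivity, ?_⟩
  rw [e]
  refine hM.add_mem (hM.add_mem (hM.add_mem (hM.add_mem (hM.add_mem ?_ ?_) ?_) ?_) ?_)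
    (hM.algebraMap_mem hκ)
  · exact hM.sq_mul_mem _ (hg δ hδ)
  · exact hM.algebraMap_mul_mem hδ.le hsq'
  · exact hM.add_mem (hM.algebraMap_mul_mem hl.le hq) (hM.algebraMap_mul_mem hl.le hq)
  · exact hM.sq_mul_mem _ hs
  · exact hM.sq_mul_mem _ hsq

theorem exists_pos_sub_algebraMap_mem (hM : IsQuadraticModule M) (harch : IsArchimedeanQM M)
    {g : R} (hpos : ∀ φ : R →ₐ[ℝ] ℝ, (∀ p ∈ M, 0 ≤ φ p) → 0 < φ g)
    (hg : ∀ δ : ℝ, 0 < δ → g + algebraMap ℝ R δ ∈ M) :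
    ∃ ε : ℝ, 0 < ε ∧ g - algebraMap ℝ R ε ∈ M := by
  by_cases h : (-1 : R) ∈ qmAdjoin M (-g)
  · obtain ⟨q, hq, s, -, e⟩ := h
    exact hM.exists_pos_sub_algebraMap_mem_of_mul_eq harch (s := s) hq (by linear_combination e) hg
  · obtain ⟨φ, hφ⟩ := (hM.adjoin (-g)).exists_algHom_nonneg (harch.mono (subset_qmAdjoin M _)) h
    have h₁ := hφ _ (mem_qmAdjoin_self hM (-g))
    have h₂ := hpos φ fun p hp => hφ p (subset_qmAdjoin M _ hp)
    rw [map_neg] at h₁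
    linarith

theorem mem_of_forall_algHom_pos (hM : IsQuadraticModule M) (harch : IsArchimedeanQM M)
    {f : R} (hf : ∀ φ : R →ₐ[ℝ] ℝ, (∀ p ∈ M, 0 ≤ φ p) → 0 < φ f) : f ∈ M := by
  by_cases hneg : (-1 : R) ∈ M
  · exact hM.mem_of_neg_one_mem hneg f
  set T := {t : ℝ | f - algebraMap ℝ R t ∈ M}
  obtain ⟨N, hN⟩ := harch (-f)
  have hT : -N ∈ T := by
    change f - _ ∈ M
    convert hN using 1; rw [map_neg]; ring
  obtain ⟨N', hN'⟩ := harch f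
  have hTbdd : BddAbove T := ⟨N', fun t ht => by
    have h := hM.nonneg_of_algebraMap_mem hneg (t := N' - t) (by
      convert hM.add_mem hN' ht using 1; rw [map_sub]; ring)
    linarith⟩
  have hup : ∀ δ : ℝ, 0 < δ → f - algebraMap ℝ R (sSup T - δ) ∈ M := fun δ hδ => by
    obtain ⟨t, ht, hlt⟩ := exists_lt_of_lt_csSup ⟨_, hT⟩ (sub_lt_self (sSup T) hδ)
    exact hM.sub_algebraMap_mem_of_le ht hlt.le
  have hpos : 0 < sSup T := by
    by_contra! hle
    obtain ⟨ε, hε, hmem⟩ := hM.exists_pos_sub_algebraMap_mem harch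
      (g := f - algebraMap ℝ R (sSup T))
      (fun φ hφ => by
        rw [map_sub, AlgHom.commutes, Algebra.algebraMap_self, RingHom.id_apply]
        linarith [hf φ hφ])
      (fun δ hδ => by convert hup δ hδ using 1; rw [map_sub]; ring)
    have hmem' : sSup T + ε ∈ T := by
      change f - _ ∈ M
      convert hmem using 1; rw [map_add]; ring
    linarith [le_csSup hTbdd hmem']
  simpa using hup _ hpos

end IsQuadraticModule

end Positivstellensatz

section Polynomial

variable {n m1 m2 : ℕ} {h : Fin m1 → MvPolynomial (Fin n) ℝ} {g : Fin m2 → MvPolynomial (Fin n) ℝ}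

/-- `I(h) + Q(g) = ⋃ₖ (I_{2k}(h) + Q_k(g))`, described without degree bounds. -/
def IQModule (h : Fin m1 → MvPolynomial (Fin n) ℝ) (g : Fin m2 → MvPolynomial (Fin n) ℝ) :
    Set (MvPolynomial (Fin n) ℝ) :=
  {p | ∃ (q : Fin m1 → MvPolynomial (Fin n) ℝ) (σ₀ : MvPolynomial (Fin n) ℝ)
      (σ : Fin m2 → MvPolynomial (Fin n) ℝ),
    IsSumSq σ₀ ∧ (∀ j, IsSumSq (σ j)) ∧ p = ∑ i, h i * q i + (σ₀ + ∑ j, g j * σ j)}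

theorem isQuadraticModule_IQModule : IsQuadraticModule (IQModule h g) where
  add_mem := by
    rintro _ _ ⟨q, σ₀, σ, hσ₀, hσ, rfl⟩ ⟨q', σ₀', σ', hσ₀', hσ', rfl⟩
    refine ⟨q + q', σ₀ + σ₀', σ + σ', hσ₀.add hσ₀', fun j => (hσ j).add (hσ' j), ?_⟩
    simp only [Pi.add_apply, mul_add, Finset.sum_add_distrib]
    ring
  sq_mul_mem s := by
    rintro _ ⟨q, σ₀, σ, hσ₀, hσ, rfl⟩
    have hs := (IsSquare.sq s).isSumSq
    refine ⟨s ^ 2 • q, s ^ 2 * σ₀, s ^ 2 • σ, hs.mul hσ₀, fun j => hs.mul (hσ j), ?_⟩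
    simp only [Pi.smul_apply, smul_eq_mul, mul_add, Finset.mul_sum, mul_left_comm (s ^ 2)]
  one_mem := ⟨0, 1, 0, .one, fun _ => .zero, by simp⟩

theorem IQSet_subset_IQModule (k : ℕ) : IQSet h g k ⊆ IQModule h g := by
  rintro _ ⟨_, ⟨q, -, rfl⟩, _, ⟨σ₀, σ, hσ₀, -, hσ, rfl⟩, rfl⟩
  exact ⟨q, σ₀, σ, hσ₀, fun j => (hσ j).1, rfl⟩

theorem eventually_mem_IQSet {p : MvPolynomial (Fin n) ℝ} (hp : p ∈ IQModule h g) :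
    ∀ᶠ k in atTop, p ∈ IQSet h g k := by
  obtain ⟨q, σ₀, σ, hσ₀, hσ, rfl⟩ := hp
  set D := ∑ i, ((h i).totalDegree + (q i).totalDegree) + σ₀.totalDegree
    + ∑ j, ((g j).totalDegree + (σ j).totalDegree)
  have hq (i : Fin m1) : (h i).totalDegree + (q i).totalDegree ≤ D :=
    (Finset.single_le_sum (f := fun i => (h i).totalDegree + (q i).totalDegree)
      (fun _ _ => Nat.zero_le _) (Finset.mem_univ i)).trans (by omega)
  have hσD (j : Fin m2) : (g j).totalDegree + (σ j).totalDegree ≤ D :=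
    (Finset.single_le_sum (f := fun j => (g j).totalDegree + (σ j).totalDegree)
      (fun _ _ => Nat.zero_le _) (Finset.mem_univ j)).trans (by omega)
  refine eventually_atTop.2 ⟨D, fun k hk => ?_⟩
  exact ⟨_, ⟨q, fun i => .inr (by linarith [hq i]), rfl⟩,
    _, ⟨σ₀, σ, hσ₀, by omega, fun j => ⟨hσ j, .inr (by linarith [hσD j])⟩, rfl⟩, rfl⟩

theorem eval_nonneg_of_mem_IQModule {p : MvPolynomial (Fin n) ℝ} (hp : p ∈ IQModule h g)
    {u : Fin n → ℝ} (hu : u ∈ semiK h g) : 0 ≤ eval u p := by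
  obtain ⟨q, σ₀, σ, hσ₀, hσ, rfl⟩ := hp
  simp only [map_add, map_sum, map_mul, hu.1, zero_mul, Finset.sum_const_zero, zero_add]
  exact add_nonneg ((hσ₀.map (eval u)).nonneg)
    (Finset.sum_nonneg fun j _ => mul_nonneg (hu.2 j) ((hσ j).map (eval u)).nonneg)

theorem h_mul_mem_IQModule (i : Fin m1) (r : MvPolynomial (Fin n) ℝ) :
    h i * r ∈ IQModule h g :=
  ⟨Pi.single i r, 0, 0, .zero, fun _ => .zero, by simp [Pi.single_apply]⟩

theorem g_mem_IQModule (j : Fin m2) : g j ∈ IQModule h g := by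
  refine ⟨0, 0, Pi.single j 1, .zero, fun j' => ?_, by simp [Pi.single_apply]⟩
  by_cases hj : j' = j <;> simp [hj]

end Polynomial

section Putinar

variable {n m1 m2 : ℕ} {h : Fin m1 → MvPolynomial (Fin n) ℝ} {g : Fin m2 → MvPolynomial (Fin n) ℝ}

theorem isArchimedeanQM_IQModule (harch : ArchQM h g) : IsArchimedeanQM (IQModule h g) := by
  obtain ⟨N, -, k, hN⟩ := harch
  have hM : IsQuadraticModule (IQModule h g) := isQuadraticModule_IQModule
  refine hM.isArchimedeanQM_of_adjoin_eq_top (adjoin_range_X (R := ℝ)) ?_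
  rintro _ ⟨i, rfl⟩
  refine ⟨N, ?_⟩
  have e : algebraMap ℝ _ N - X i ^ 2
      = (C N - ∑ j, X j ^ 2) + ∑ j ∈ Finset.univ.erase i, (X j : MvPolynomial (Fin n) ℝ) ^ 2 := by
    rw [← Finset.add_sum_erase _ _ (Finset.mem_univ i), MvPolynomial.algebraMap_eq]; ring
  rw [e]
  exact hM.add_mem (IQSet_subset_IQModule k hN) (hM.mem_of_isSumSq (IsSumSq.sum_sq _ _))

theorem algHom_apply_eq_eval (φ : MvPolynomial (Fin n) ℝ →ₐ[ℝ] ℝ) (p : MvPolynomial (Fin n) ℝ) :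
    φ p = eval (fun i => φ (X i)) p := by
  conv_lhs => rw [aeval_unique φ]
  rfl

theorem mem_semiK_of_nonneg_on_IQModule (φ : MvPolynomial (Fin n) ℝ →ₐ[ℝ] ℝ)
    (hφ : ∀ p ∈ IQModule h g, 0 ≤ φ p) : (fun i => φ (X i)) ∈ semiK h g := by
  refine ⟨fun i => ?_, fun j => ?_⟩
  · have h₁ := hφ _ (h_mul_mem_IQModule (g := g) i 1)
    have h₂ := hφ _ (h_mul_mem_IQModule (g := g) i (-1))
    rw [mul_one] at h₁
    rw [mul_neg_one, map_neg] at h₂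
    rw [← algHom_apply_eq_eval]
    linarith
  · rw [← algHom_apply_eq_eval]
    exact hφ _ (g_mem_IQModule j)

theorem eventually_mem_IQSet_of_pos (harch : ArchQM h g) {f : MvPolynomial (Fin n) ℝ}
    (hf : ∀ u ∈ semiK h g, 0 < eval u f) : ∀ᶠ k in atTop, f ∈ IQSet h g k :=
  eventually_mem_IQSet <| isQuadraticModule_IQModule.mem_of_forall_algHom_pos
    (isArchimedeanQM_IQModule harch) fun φ hφ => by
      rw [algHom_apply_eq_eval]
      exact hf _ (mem_semiK_of_nonneg_on_IQModule φ hφ)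

end Putinar

section Duality

variable {n m : ℕ} {A : Finset (Exp n)}

theorem evalA_eq_dotProduct (p : A → ℝ) (u : Fin n → ℝ) :
    evalA A p u = dotProduct p fun α => monoEval (α : Exp n) u :=
  rfl

theorem eval_toPoly (p : A → ℝ) (u : Fin n → ℝ) : eval u (toPoly A p) = evalA A p u := by
  simp only [toPoly, evalA, map_sum, eval_monomial, Finsupp.prod_pow]
  simp [monoEval]

theorem pos_of_mem_interior_PAcone {K : Set (Fin n → ℝ)} (hfull : KFull A K) {p : A → ℝ}
    (hp : p ∈ interior (PAcone A K)) : ∀ u ∈ K, 0 < evalA A p u := by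
  obtain ⟨q, hq⟩ := hfull
  have hnear : ∀ᶠ t in 𝓝 (0 : ℝ), p - t • q ∈ PAcone A K := by
    have hc : Continuous fun t : ℝ => p - t • q := by fun_prop
    exact (hc.tendsto' 0 p (by simp)).eventually (mem_interior_iff_mem_nhds.1 hp)
  obtain ⟨t, htP, ht⟩ := ((hnear.filter_mono nhdsWithin_le_nhds).and
    (self_mem_nhdsWithin : Set.Ioi (0 : ℝ) ∈ 𝓝[>] 0)).exists
  intro u hu
  have h := htP u hu
  rw [evalA_eq_dotProduct, sub_dotProduct, smul_dotProduct, smul_eq_mul,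
    ← evalA_eq_dotProduct, ← evalA_eq_dotProduct] at h
  nlinarith [mul_pos (Set.mem_Ioi.1 ht) (hq u hu)]

theorem evalA_cLam_convexComb (c : A → ℝ) (a : Fin m → A → ℝ) (μ ν : Fin m → ℝ) (t : ℝ)
    (u : Fin n → ℝ) : evalA A (cLam c a ((1 - t) • μ + t • ν)) u
      = (1 - t) * evalA A (cLam c a μ) u + t * evalA A (cLam c a ν) u := by
  have e : cLam c a ((1 - t) • μ + t • ν) = (1 - t) • cLam c a μ + t • cLam c a ν := by
    simp only [cLam, Pi.add_apply, Pi.smul_apply, smul_eq_mul, add_smul, mul_smul,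
      Finset.sum_add_distrib, ← Finset.smul_sum]
    module
  simp only [e, evalA_eq_dotProduct, add_dotProduct, smul_dotProduct, smul_eq_mul]

end Duality

theorem statement_10_general {n m1 m2 m : ℕ}
    (h : Fin m1 → MvPolynomial (Fin n) ℝ) (g : Fin m2 → MvPolynomial (Fin n) ℝ)
    {A : Finset (Exp n)}
    (c : A → ℝ) (a : Fin m → (A → ℝ)) (b : Fin m → ℝ)
    (hint : ∃ lam0 : Fin m → ℝ, cLam c a lam0 ∈ interior (PAcone A (semiK h g)))
    (hfull : KFull A (semiK h g)) (harch : ArchQM h g)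
    (bmax : ℝ)
    (hbmax : IsLUB {t : ℝ | ∃ lam : Fin m → ℝ,
        cLam c a lam ∈ PAcone A (semiK h g) ∧ t = ∑ i, b i * lam i} bmax) :
    (∀ k : ℕ, ∀ lam : Fin m → ℝ, toPoly A (cLam c a lam) ∈ IQSet h g k →
        ∑ i, b i * lam i ≤ bmax) ∧
    ∀ ε : ℝ, 0 < ε → ∃ N : ℕ, ∀ k : ℕ, N ≤ k →
      ∃ lam : Fin m → ℝ, toPoly A (cLam c a lam) ∈ IQSet h g k ∧
        bmax - ε ≤ ∑ i, b i * lam i := by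
  refine ⟨fun k lam hmem => hbmax.1 ⟨lam, fun u hu => ?_, rfl⟩, fun ε hε => ?_⟩
  · rw [← eval_toPoly]
    exact eval_nonneg_of_mem_IQModule (IQSet_subset_IQModule k hmem) hu
  obtain ⟨_, ⟨lam₁, hlam₁, rfl⟩, hlt, -⟩ := hbmax.exists_between (sub_lt_self bmax hε)
  obtain ⟨lam₀, hlam₀⟩ := hint
  set lam : ℝ → Fin m → ℝ := fun t => (1 - t) • lam₁ + t • lam₀
  have hobj : ∀ᶠ t in 𝓝 (0 : ℝ), bmax - ε < ∑ i, b i * lam t i := by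
    have hc : Continuous fun t => ∑ i, b i * lam t i := by fun_prop
    exact (hc.tendsto' 0 _ (by simp [lam])).eventually (lt_mem_nhds hlt)
  obtain ⟨t, hobj, ht₀, ht₁⟩ :=
    ((hobj.filter_mono nhdsWithin_le_nhds).and (Ioo_mem_nhdsGT one_pos)).exists
  have hpos (u : Fin n → ℝ) (hu : u ∈ semiK h g) : 0 < eval u (toPoly A (cLam c a (lam t))) := by
    rw [eval_toPoly, evalA_cLam_convexComb]
    exact add_pos_of_nonneg_of_pos (mul_nonneg (sub_nonneg.2 ht₁.le) (hlam₁ u hu))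
      (mul_pos ht₀ (pos_of_mem_interior_PAcone hfull hlam₀ u hu))
  obtain ⟨N, hN⟩ := eventually_atTop.1 (eventually_mem_IQSet_of_pos harch hpos)
  exact ⟨N, fun k hk => ⟨lam t, hN k hk, hobj.le⟩⟩

/-- Under feasibility of (4.1), an interior point of (4.2),
`K`-fullness and archimedeanness, the optimal values `b^k` of the dual relaxations
(4.4) satisfy `b^k ≤ b_max` for all `k` and `b^k → b_max`. -/
theorem statement_10 {n m1 m2 m : ℕ} (hn : 1 ≤ n)
    (h : Fin m1 → MvPolynomial (Fin n) ℝ) (g : Fin m2 → MvPolynomial (Fin n) ℝ)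
    {A : Finset (Exp n)} (hA : A.Nonempty)
    (c : A → ℝ) (a : Fin m → (A → ℝ)) (b : Fin m → ℝ)
    (hfeas : ∃ y ∈ RAcone A (semiK h g), ∀ i, pairA A (a i) y = b i)
    (hint : ∃ lam0 : Fin m → ℝ, cLam c a lam0 ∈ interior (PAcone A (semiK h g)))
    (hfull : KFull A (semiK h g)) (harch : ArchQM h g)
    (bmax : ℝ)
    (hbmax : IsLUB {t : ℝ | ∃ lam : Fin m → ℝ,
        cLam c a lam ∈ PAcone A (semiK h g) ∧ t = ∑ i, b i * lam i} bmax) :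
    (∀ k : ℕ, ∀ lam : Fin m → ℝ, toPoly A (cLam c a lam) ∈ IQSet h g k →
        ∑ i, b i * lam i ≤ bmax) ∧
    ∀ ε : ℝ, 0 < ε → ∃ N : ℕ, ∀ k : ℕ, N ≤ k →
      ∃ lam : Fin m → ℝ, toPoly A (cLam c a lam) ∈ IQSet h g k ∧
        bmax - ε ≤ ∑ i, b i * lam i :=
  statement_10_general h g c a b hint hfull harch bmax hbmax
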